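/- Let 1 < ℓ < 2/√3 and let H be the regular hexagon centered at the origin circumscribed about the unit disk B² in E². Then vol_2(H ∩ ℓB²) = ℓ²(π − 6·arccos(1/ℓ)) + 6√(ℓ² − 1). -/

import Mathlib

open MeasureTheory Metric

/-- The regular hexagon centered at the origin circumscribed about the unit disk `B²`
(inradius `1`, circumradius `2/√3`): the convex hull of its six vertices. -/
noncomputable def regularHexagon : Set (EuclideanSpace ℝ (Fin 2)) :=
  convexHull ℝ (Set.range fun k : Fin 6 =>
    (WithLp.equiv 2 (Fin 2 → ℝ)).symm
      ![2 / Real.sqrt 3 * Real.cos ((k : ℝ) * (Real.pi / 3)),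
        2 / Real.sqrt 3 * Real.sin ((k : ℝ) * (Real.pi / 3))])

/-! The hexagon is the intersection of the six half-planes `⟪uₖ, x⟫ ≤ 1`, where the `uₖ` are the
unit normals of its sides. A point in two of the caps `{x ∈ ℓB² | ⟪uₖ, x⟫ > 1}` would satisfy
`⟪uₖ + uₘ, x⟫ > 2` with `‖uₖ + uₘ‖ ≤ √3`, so for `ℓ < 2/√3` the six caps are disjoint. Each is
congruent, by a reflection, to the circular segment `{x ∈ ℓB² | x₀ > 1}`, of area
`ℓ² arccos(1/ℓ) - √(ℓ² - 1)`, and the area of `H ∩ ℓB²` is `πℓ²` minus six times that. -/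

open Function Set Real
open scoped RealInnerProductSpace

lemma cos_le_cos_of_le_of_le_two_pi_sub {a x : ℝ} (ha : 0 ≤ a) (hax : a ≤ x)
    (hxa : x ≤ 2 * π - a) : cos x ≤ cos a := by
  rcases le_total x π with hx | hx
  · exact cos_le_cos_of_nonneg_of_le_pi ha hx hax
  · rw [← cos_two_pi_sub x]
    exact cos_le_cos_of_nonneg_of_le_pi ha (by linarith) (by linarith)

lemma cos_int_mul_pi_div_three_add_emod (n : ℤ) (φ : ℝ) :
    cos (n * (π / 3) + φ) = cos ((n % 6 : ℤ) * (π / 3) + φ) := by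
  rw [← cos_add_int_mul_two_pi ((n % 6 : ℤ) * (π / 3) + φ) (n / 6)]
  congr 1
  conv_lhs => rw [← Int.emod_add_mul_ediv n 6]
  push_cast
  ring

lemma cos_int_mul_pi_div_three_add_pi_div_six_le (n : ℤ) :
    cos (n * (π / 3) + π / 6) ≤ √3 / 2 := by
  have h0 : 0 ≤ n % 6 := Int.emod_nonneg n (by norm_num)
  have h5 : n % 6 ≤ 5 := by omega
  rw [cos_int_mul_pi_div_three_add_emod, ← cos_pi_div_six]
  have h0' : (0 : ℝ) ≤ (n % 6 : ℤ) := by exact_mod_cast h0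
  have h5' : ((n % 6 : ℤ) : ℝ) ≤ 5 := by exact_mod_cast h5
  exact cos_le_cos_of_le_of_le_two_pi_sub (by positivity) (by nlinarith [pi_pos])
    (by nlinarith [pi_pos])

lemma cos_int_mul_pi_div_three_le (n : ℤ) (hn : ¬ (6 : ℤ) ∣ n) :
    cos (n * (π / 3)) ≤ 1 / 2 := by
  have h1 : 1 ≤ n % 6 := by omega
  have h5 : n % 6 ≤ 5 := by omega
  rw [← add_zero (_ * _), cos_int_mul_pi_div_three_add_emod, add_zero, ← cos_pi_div_three]
  have h1' : (1 : ℝ) ≤ (n % 6 : ℤ) := by exact_mod_cast h1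
  have h5' : ((n % 6 : ℤ) : ℝ) ≤ 5 := by exact_mod_cast h5
  exact cos_le_cos_of_le_of_le_two_pi_sub (by positivity) (by nlinarith [pi_pos])
    (by nlinarith [pi_pos])

lemma Convex.smul_add_smul_mem_of_zero_mem {𝕜 E : Type*} [Field 𝕜] [LinearOrder 𝕜]
    [IsStrictOrderedRing 𝕜] [AddCommGroup E] [Module 𝕜 E] {s : Set E} (hs : Convex 𝕜 s)
    {p q : E} {a b : 𝕜} (h0 : 0 ∈ s) (hp : p ∈ s) (hq : q ∈ s) (ha : 0 ≤ a) (hb : 0 ≤ b)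
    (hab : a + b ≤ 1) : a • p + b • q ∈ s := by
  have h := hs.sum_mem (t := Finset.univ) (w := ![a, b, 1 - a - b]) (z := ![p, q, 0])
    (by simp [Fin.forall_fin_succ, ha, hb]; linarith) (by simp [Fin.sum_univ_three])
    (by simp [Fin.forall_fin_succ, hp, hq, h0])
  simpa [Fin.sum_univ_three] using h

lemma exists_nonneg_and_succ_nonpos {α : Type*} [LinearOrder α] [Zero α] {f : ℕ → α} {a b : ℕ}
    (hab : a < b) (ha : 0 ≤ f a) (hb : f b ≤ 0) : ∃ j, 0 ≤ f j ∧ f (j + 1) ≤ 0 := by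
  by_contra! h
  have hpos : ∀ n, a + 1 ≤ n → 0 < f n :=
    Nat.le_induction (h a ha) fun n _ hn => h n hn.le
  exact (hpos b hab).not_ge hb

section BallCap

variable {E : Type*} [NormedAddCommGroup E] [InnerProductSpace ℝ E]

def ballCap (u : E) (r c : ℝ) : Set E := closedBall 0 r ∩ {x | c < ⟪u, x⟫}

lemma ballCap_subset_closedBall (u : E) (r c : ℝ) : ballCap u r c ⊆ closedBall 0 r :=
  inter_subset_left

lemma measurableSet_ballCap [MeasurableSpace E] [OpensMeasurableSpace E] (u : E) (r c : ℝ) :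
    MeasurableSet (ballCap u r c) :=
  measurableSet_closedBall.inter (isOpen_lt continuous_const (by fun_prop)).measurableSet

lemma measure_ballCap_ne_top [MeasurableSpace E] [ProperSpace E] (μ : Measure E)
    [IsFiniteMeasureOnCompacts μ] (u : E) (r c : ℝ) : μ (ballCap u r c) ≠ ⊤ :=
  measure_ne_top_of_subset (ballCap_subset_closedBall u r c) measure_closedBall_lt_top.ne

lemma disjoint_ballCap {u v : E} {r c : ℝ} (h : ‖u + v‖ * r ≤ 2 * c) :
    Disjoint (ballCap u r c) (ballCap v r c) := by
  rw [Set.disjoint_left]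
  rintro x ⟨hxr, hux : c < ⟪u, x⟫⟩ ⟨-, hvx : c < ⟪v, x⟫⟩
  have hx : ⟪u + v, x⟫ ≤ ‖u + v‖ * r :=
    (real_inner_le_norm _ _).trans (by gcongr; exact mem_closedBall_zero_iff.1 hxr)
  rw [inner_add_left] at hx
  linarith

lemma LinearIsometryEquiv.preimage_ballCap (f : E ≃ₗᵢ[ℝ] E) (u : E) (r c : ℝ) :
    f ⁻¹' ballCap u r c = ballCap (f.symm u) r c := by
  ext x
  simp [ballCap, ← f.inner_map_map (f.symm u) x]

lemma volume_ballCap_eq_of_norm_eq [FiniteDimensional ℝ E] [MeasurableSpace E] [BorelSpace E]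
    {u v : E} (h : ‖u‖ = ‖v‖) (r c : ℝ) : volume (ballCap u r c) = volume (ballCap v r c) := by
  have hf : (ℝ ∙ (u - v))ᗮ.reflection.symm u = v := by
    rw [Submodule.reflection_symm]
    exact Submodule.reflection_sub h
  rw [← hf, ← LinearIsometryEquiv.preimage_ballCap, LinearIsometryEquiv.measurePreserving
    _ |>.measure_preimage (measurableSet_ballCap u r c).nullMeasurableSet]

end BallCap

lemma volume_setOf_sq_le (c : ℝ) : volume {y : ℝ | y ^ 2 ≤ c} = ENNReal.ofReal (2 * √c) := by
  rcases le_or_gt 0 c with hc | hc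
  · have : {y : ℝ | y ^ 2 ≤ c} = Icc (-√c) √c := by ext y; exact Real.sq_le hc
    rw [this, Real.volume_Icc, sub_neg_eq_add, two_mul]
  · have : {y : ℝ | y ^ 2 ≤ c} = ∅ := by ext y; simpa using hc.trans_le (sq_nonneg y)
    rw [this, sqrt_eq_zero'.2 hc.le]; simp

def circularSegment (r c : ℝ) : Set (ℝ × ℝ) := {p | p.1 ^ 2 + p.2 ^ 2 ≤ r ^ 2 ∧ c < p.1}

lemma volume_preimage_mk_circularSegment {r c : ℝ} (hr : 0 ≤ r) (x : ℝ) :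
    volume (Prod.mk x ⁻¹' circularSegment r c) =
      (Ioc c r).indicator (fun x => ENNReal.ofReal (2 * √(r ^ 2 - x ^ 2))) x := by
  by_cases hcx : c < x
  · have : Prod.mk x ⁻¹' circularSegment r c = {y | y ^ 2 ≤ r ^ 2 - x ^ 2} := by
      ext y; simp [circularSegment, hcx, le_sub_iff_add_le']
    rw [this, volume_setOf_sq_le]
    by_cases hxr : x ≤ r
    · rw [indicator_of_mem (show x ∈ Ioc c r from ⟨hcx, hxr⟩)]
    · rw [indicator_of_notMem (fun h => hxr h.2), sqrt_eq_zero'.2 (by nlinarith)]; simp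
  · have : Prod.mk x ⁻¹' circularSegment r c = ∅ := by ext y; simp [circularSegment, hcx]
    rw [this, indicator_of_notMem (fun h => hcx h.1), measure_empty]

lemma volume_circularSegment {r c : ℝ} (hr : 0 ≤ r) (hc : c ≤ r) :
    volume (circularSegment r c) = ENNReal.ofReal (∫ x in c..r, 2 * √(r ^ 2 - x ^ 2)) := by
  have hmeas : MeasurableSet (circularSegment r c) :=
    (measurableSet_le (by fun_prop : Measurable fun p : ℝ × ℝ => p.1 ^ 2 + p.2 ^ 2)
      measurable_const).inter (measurableSet_lt measurable_const measurable_fst)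
  rw [Measure.volume_eq_prod, Measure.prod_apply hmeas,
    lintegral_congr (volume_preimage_mk_circularSegment hr),
    lintegral_indicator measurableSet_Ioc, intervalIntegral.integral_of_le hc,
    ofReal_integral_eq_lintegral_ofReal]
  · exact (by fun_prop : Continuous fun x : ℝ => 2 * √(r ^ 2 - x ^ 2)).integrableOn_Ioc
  · exact Filter.Eventually.of_forall fun x => by positivity

lemma integral_two_mul_sqrt_sq_sub_sq {r c : ℝ} (hr : 0 < r) (hrc : -r ≤ c) (hc : c ≤ r) :
    ∫ x in c..r, 2 * √(r ^ 2 - x ^ 2) = r ^ 2 * arccos (c / r) - c * √(r ^ 2 - c ^ 2) := by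
  set G : ℝ → ℝ := fun x => x * √(r ^ 2 - x ^ 2) - r ^ 2 * arccos (x / r)
  have hderiv : ∀ x ∈ Ioo c r, HasDerivAt G (2 * √(r ^ 2 - x ^ 2)) x := by
    rintro x ⟨hcx, hxr⟩
    have hpos : 0 < r ^ 2 - x ^ 2 := by nlinarith
    have hs : √(r ^ 2 - x ^ 2) ^ 2 = r ^ 2 - x ^ 2 := sq_sqrt hpos.le
    have hsq : HasDerivAt (fun y => √(r ^ 2 - y ^ 2)) (-(2 * x) / (2 * √(r ^ 2 - x ^ 2))) x :=
      (((hasDerivAt_pow 2 x).const_sub (r ^ 2)).sqrt hpos.ne').congr_deriv (by push_cast; ring)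
    have harc := (hasDerivAt_arccos (x := x / r) (by rw [ne_eq, div_eq_iff hr.ne']; linarith)
      (by rw [ne_eq, div_eq_iff hr.ne']; linarith)).comp x ((hasDerivAt_id' x).div_const r)
    have h1 : √(1 - (x / r) ^ 2) = √(r ^ 2 - x ^ 2) / r := by
      rw [← sqrt_sq hr.le, ← sqrt_div' _ (sq_nonneg r), sqrt_sq hr.le]; congr 1; field_simp
    refine (((hasDerivAt_id' x).mul hsq).sub (harc.const_mul (r ^ 2))).congr_deriv ?_
    rw [h1]
    have : 0 < √(r ^ 2 - x ^ 2) := sqrt_pos.2 hpos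
    field_simp
    linear_combination -hs
  rw [intervalIntegral.integral_eq_sub_of_hasDerivAt_of_le hc (by fun_prop) hderiv
    ((by fun_prop : Continuous fun x : ℝ => 2 * √(r ^ 2 - x ^ 2)).intervalIntegrable c r)]
  simp [G, div_self hr.ne']

lemma measureReal_ballCap_single {r c : ℝ} (hr : 0 < r) (hrc : -r ≤ c) (hc : c ≤ r) :
    volume.real (ballCap (EuclideanSpace.single 0 1 : EuclideanSpace ℝ (Fin 2)) r c) =
      r ^ 2 * arccos (c / r) - c * √(r ^ 2 - c ^ 2) := by
  set e := (MeasurableEquiv.toLp 2 (Fin 2 → ℝ)).symm.trans (MeasurableEquiv.finTwoArrow (α := ℝ))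
  have he : MeasurePreserving e :=
    (volume_preserving_finTwoArrow ℝ).comp (PiLp.volume_preserving_ofLp (Fin 2))
  have hpre : ballCap (EuclideanSpace.single 0 1 : EuclideanSpace ℝ (Fin 2)) r c =
      e ⁻¹' circularSegment r c := by
    ext x
    simp [ballCap, circularSegment, e, ← sq_le_sq₀ (norm_nonneg x) hr.le,
      EuclideanSpace.norm_sq_eq, EuclideanSpace.inner_single_left]
  rw [measureReal_def, hpre, he.measure_preimage_equiv, volume_circularSegment hr.le hc,
    ENNReal.toReal_ofReal (intervalIntegral.integral_nonneg hc fun x _ => by positivity),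
    integral_two_mul_sqrt_sq_sub_sq hr hrc hc]

noncomputable def unitVec (θ : ℝ) : EuclideanSpace ℝ (Fin 2) := !₂[cos θ, sin θ]

@[simp] lemma unitVec_apply_zero (θ : ℝ) : unitVec θ 0 = cos θ := rfl
@[simp] lemma unitVec_apply_one (θ : ℝ) : unitVec θ 1 = sin θ := rfl

lemma real_inner_fin_two (x y : EuclideanSpace ℝ (Fin 2)) : ⟪x, y⟫ = x 0 * y 0 + x 1 * y 1 := by
  simp [EuclideanSpace.inner_eq_star_dotProduct, Fin.sum_univ_two, dotProduct, mul_comm]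

lemma inner_unitVec (α β : ℝ) : ⟪unitVec α, unitVec β⟫ = cos (α - β) := by
  rw [real_inner_fin_two, cos_sub]; simp

lemma norm_unitVec (θ : ℝ) : ‖unitVec θ‖ = 1 := by
  rw [norm_eq_sqrt_real_inner, inner_unitVec, sub_self, cos_zero, sqrt_one]

lemma unitVec_add_pi (θ : ℝ) : unitVec (θ + π) = -unitVec θ := by
  ext i; fin_cases i <;> simp [cos_add_pi, sin_add_pi]

lemma unitVec_periodic : Function.Periodic unitVec (2 * π) := by
  intro θ; ext i; fin_cases i <;> simp

noncomputable def hexVertex (n : ℕ) : EuclideanSpace ℝ (Fin 2) := (2 / √3) • unitVec (n * (π / 3))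

-- `hexNormal n` is the outer unit normal of the side `[hexVertex n, hexVertex (n + 1)]`.
noncomputable def hexNormal (n : ℕ) : EuclideanSpace ℝ (Fin 2) := unitVec (n * (π / 3) + π / 6)

lemma unitVec_nat_mul_pi_div_three_add_mod (n : ℕ) (φ : ℝ) :
    unitVec (n * (π / 3) + φ) = unitVec ((n % 6 : ℕ) * (π / 3) + φ) := by
  rw [← unitVec_periodic.nat_mul (n / 6) ((n % 6 : ℕ) * (π / 3) + φ)]
  congr 1
  conv_lhs => rw [← Nat.mod_add_div n 6]
  push_cast
  ring

lemma hexVertex_mod_six (n : ℕ) : hexVertex (n % 6) = hexVertex n := by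
  simp only [hexVertex]
  rw [← add_zero (_ * _), ← add_zero ((n : ℝ) * _), unitVec_nat_mul_pi_div_three_add_mod n]

lemma hexNormal_mod_six (n : ℕ) : hexNormal (n % 6) = hexNormal n := by
  simp only [hexNormal]
  rw [unitVec_nat_mul_pi_div_three_add_mod n]

lemma hexNormal_add_three (n : ℕ) : hexNormal (n + 3) = -hexNormal n := by
  rw [hexNormal, hexNormal, ← unitVec_add_pi]
  push_cast; ring_nf

lemma hexVertex_add_three (n : ℕ) : hexVertex (n + 3) = -hexVertex n := by
  rw [hexVertex, hexVertex, ← smul_neg, ← unitVec_add_pi]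
  push_cast; ring_nf

lemma norm_hexNormal (n : ℕ) : ‖hexNormal n‖ = 1 := norm_unitVec _

lemma inner_hexNormal_hexNormal (k m : ℕ) :
    ⟪hexNormal k, hexNormal m⟫ = cos (((k : ℤ) - m : ℤ) * (π / 3)) := by
  rw [hexNormal, hexNormal, inner_unitVec]; push_cast; ring_nf

lemma inner_hexNormal_hexVertex (k j : ℕ) :
    ⟪hexNormal k, hexVertex j⟫ = 2 / √3 * cos (((k : ℤ) - j : ℤ) * (π / 3) + π / 6) := by
  rw [hexVertex, inner_smul_right, hexNormal, inner_unitVec]; push_cast; ring_nf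

lemma inner_hexNormal_hexVertex_le (k j : ℕ) : ⟪hexNormal k, hexVertex j⟫ ≤ 1 := by
  rw [inner_hexNormal_hexVertex]
  calc 2 / √3 * cos (((k : ℤ) - j : ℤ) * (π / 3) + π / 6) ≤ 2 / √3 * (√3 / 2) := by
        gcongr; exact cos_int_mul_pi_div_three_add_pi_div_six_le _
    _ = 1 := by field_simp

lemma inner_hexNormal_hexVertex_self (j : ℕ) : ⟪hexNormal j, hexVertex j⟫ = 1 := by
  rw [inner_hexNormal_hexVertex, sub_self, Int.cast_zero, zero_mul, zero_add, cos_pi_div_six]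
  field_simp

lemma inner_hexNormal_hexVertex_succ (j : ℕ) : ⟪hexNormal j, hexVertex (j + 1)⟫ = 1 := by
  rw [inner_hexNormal_hexVertex]
  push_cast
  rw [show ((j : ℝ) - (j + 1)) * (π / 3) + π / 6 = -(π / 6) by ring, cos_neg, cos_pi_div_six]
  field_simp

-- The coefficients come from `hexNormal (j + 1) ⟂ hexVertex j` and
-- `hexNormal (j + 2) ⟂ hexVertex (j + 1)`.
lemma eq_smul_hexVertex_add_smul_hexVertex_succ (j : ℕ) (x : EuclideanSpace ℝ (Fin 2)) :
    x = (-⟪hexNormal (j + 2), x⟫) • hexVertex j + ⟪hexNormal (j + 1), x⟫ • hexVertex (j + 1) := by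
  set b : ℝ := j * (π / 3) + π / 6
  have h2 : hexNormal (j + 2) = -unitVec (b - π / 3) := by
    rw [hexNormal, ← unitVec_add_pi]; congr 1; push_cast; ring
  have h1 : hexNormal (j + 1) = unitVec (b + π / 3) := by
    rw [hexNormal]; congr 1; push_cast; ring
  have v0 : hexVertex j = (2 / √3) • unitVec (b - π / 6) := by
    rw [hexVertex]; congr 2; ring
  have v1 : hexVertex (j + 1) = (2 / √3) • unitVec (b + π / 6) := by
    rw [hexVertex]; congr 2; push_cast; ring
  have hpy := sin_sq_add_cos_sq b
  rw [h2, h1, v0, v1]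
  ext i; fin_cases i <;>
    simp [real_inner_fin_two, cos_add, sin_add, cos_sub, sin_sub, cos_pi_div_six, sin_pi_div_six,
      cos_pi_div_three, sin_pi_div_three] <;> field_simp
  · linear_combination (-2 * √3 * x 0) * hpy
  · linear_combination (-2 * √3 * x 1) * hpy

lemma regularHexagon_eq_convexHull_hexVertex :
    regularHexagon = convexHull ℝ (range fun k : Fin 6 => hexVertex k) := by
  rw [regularHexagon]
  congr! with k
  ext i; fin_cases i <;> simp [hexVertex]

lemma hexVertex_mem_regularHexagon (n : ℕ) : hexVertex n ∈ regularHexagon := by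
  rw [regularHexagon_eq_convexHull_hexVertex, ← hexVertex_mod_six]
  exact subset_convexHull ℝ _ ⟨⟨n % 6, Nat.mod_lt n (by norm_num)⟩, rfl⟩

lemma convex_regularHexagon : Convex ℝ regularHexagon := convex_convexHull ℝ _

lemma zero_mem_regularHexagon : (0 : EuclideanSpace ℝ (Fin 2)) ∈ regularHexagon := by
  have h3 := hexVertex_mem_regularHexagon (0 + 3)
  rw [hexVertex_add_three] at h3
  simpa using convex_regularHexagon (hexVertex_mem_regularHexagon 0) h3
    (a := 1 / 2) (b := 1 / 2) (by norm_num) (by norm_num) (by norm_num)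

lemma regularHexagon_subset_halfSpace (k : ℕ) :
    regularHexagon ⊆ {x | ⟪hexNormal k, x⟫ ≤ 1} := by
  rw [regularHexagon_eq_convexHull_hexVertex]
  refine convexHull_min ?_ (convex_halfSpace_le (innerₛₗ ℝ (hexNormal k)).isLinear 1)
  rintro _ ⟨j, rfl⟩
  exact inner_hexNormal_hexVertex_le k j

lemma mem_regularHexagon_of_forall_inner_le {x : EuclideanSpace ℝ (Fin 2)}
    (hx : ∀ n : ℕ, ⟪hexNormal n, x⟫ ≤ 1) : x ∈ regularHexagon := by
  -- `g` changes sign since `g (m + 3) = -g m`; at a sign change `j`, `x` lies in the cone over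
  -- the side `[hexVertex j, hexVertex (j + 1)]`, with coefficients summing to `⟪hexNormal j, x⟫`.
  set g : ℕ → ℝ := fun m => ⟪hexNormal (m + 1), x⟫
  have hg : ∀ m, g (m + 3) = -g m := fun m => by
    simp only [g, add_right_comm m 3 1, hexNormal_add_three, inner_neg_left]
  obtain ⟨j, hj, hj1⟩ : ∃ j, 0 ≤ g j ∧ g (j + 1) ≤ 0 := by
    rcases le_or_gt 0 (g 0) with h0 | h0
    · exact exists_nonneg_and_succ_nonpos (by norm_num : 0 < 3) h0 (by rw [hg 0]; linarith)
    · exact exists_nonneg_and_succ_nonpos (by norm_num : 3 < 6) (by rw [hg 0]; linarith)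
        (by rw [hg 3, hg 0]; linarith)
  have hsum : -⟪hexNormal (j + 2), x⟫ + ⟪hexNormal (j + 1), x⟫ = ⟪hexNormal j, x⟫ := by
    conv_rhs => rw [eq_smul_hexVertex_add_smul_hexVertex_succ j x]
    rw [inner_add_right, inner_smul_right, inner_smul_right, inner_hexNormal_hexVertex_self,
      inner_hexNormal_hexVertex_succ, mul_one, mul_one]
  rw [eq_smul_hexVertex_add_smul_hexVertex_succ j x]
  exact convex_regularHexagon.smul_add_smul_mem_of_zero_mem zero_mem_regularHexagon
    (hexVertex_mem_regularHexagon j) (hexVertex_mem_regularHexagon (j + 1))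
    (by simpa [g] using hj1) hj (hsum ▸ hx j)

lemma regularHexagon_eq_iInter :
    regularHexagon = ⋂ k : Fin 6, {x | ⟪hexNormal k, x⟫ ≤ 1} := by
  refine (subset_iInter fun k : Fin 6 => regularHexagon_subset_halfSpace k).antisymm
    fun x hx => ?_
  refine mem_regularHexagon_of_forall_inner_le fun n => ?_
  rw [← hexNormal_mod_six]
  exact mem_iInter.1 hx ⟨n % 6, Nat.mod_lt n (by norm_num)⟩

lemma inner_hexNormal_le_half {k m : Fin 6} (h : k ≠ m) : ⟪hexNormal k, hexNormal m⟫ ≤ 1 / 2 := by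
  rw [inner_hexNormal_hexNormal]
  exact cos_int_mul_pi_div_three_le _ (by omega)

lemma pairwise_disjoint_ballCap_hexNormal {r : ℝ} (hr : r < 2 / √3) :
    Pairwise (Disjoint on fun k : Fin 6 => ballCap (hexNormal k) r 1) := by
  intro k m hkm
  apply disjoint_ballCap
  have hsq : ‖hexNormal k + hexNormal m‖ ^ 2 ≤ 3 := by
    rw [norm_add_sq_real, norm_hexNormal, norm_hexNormal]
    linarith [inner_hexNormal_le_half hkm]
  have hle : ‖hexNormal k + hexNormal m‖ ≤ √3 := by
    simpa using Real.abs_le_sqrt hsq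
  have hr3 : r * √3 < 2 := (lt_div_iff₀ (by positivity)).1 hr
  rcases le_total r 0 with hr0 | hr0
  · nlinarith [norm_nonneg (hexNormal k + hexNormal m)]
  · nlinarith

lemma regularHexagon_inter_closedBall (r : ℝ) :
    regularHexagon ∩ closedBall 0 r = closedBall 0 r \ ⋃ k : Fin 6, ballCap (hexNormal k) r 1 := by
  ext x
  simp only [regularHexagon_eq_iInter, ballCap, mem_inter_iff, mem_iInter, mem_sdiff, mem_iUnion,
    mem_ofPred_eq, not_exists, not_and, not_lt]
  tauto

/-- For `1 < ℓ < 2/√3`, the area of the intersection of the regular hexagon `H` circumscribed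
about the unit disk with the concentric disk of radius `ℓ` is
`ℓ²(π - 6·arccos(1/ℓ)) + 6√(ℓ² - 1)`. -/
theorem area_hexagon_inter_disk (ll : ℝ) (hll1 : 1 < ll) (hll2 : ll < 2 / Real.sqrt 3) :
    (volume (regularHexagon ∩ closedBall (0 : EuclideanSpace ℝ (Fin 2)) ll)).toReal =
      ll ^ 2 * (Real.pi - 6 * Real.arccos (1 / ll)) + 6 * Real.sqrt (ll ^ 2 - 1) := by
  have hcap (k : Fin 6) : volume.real (ballCap (hexNormal k) ll 1) =
      ll ^ 2 * arccos (1 / ll) - 1 * √(ll ^ 2 - 1 ^ 2) := by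
    rw [measureReal_def, volume_ballCap_eq_of_norm_eq (v := EuclideanSpace.single 0 1)
      (by simp [norm_hexNormal]), ← measureReal_def,
      measureReal_ballCap_single (by linarith) (by linarith) hll1.le]
  rw [← measureReal_def, regularHexagon_inter_closedBall,
    measureReal_sdiff (iUnion_subset fun k => ballCap_subset_closedBall _ _ _)
      (.iUnion fun k => measurableSet_ballCap _ _ _) measure_closedBall_lt_top.ne,
    measureReal_iUnion_fintype (pairwise_disjoint_ballCap_hexNormal hll2)
      (fun k => measurableSet_ballCap _ _ _)
      fun k => measure_ballCap_ne_top _ _ _ _]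
  simp [hcap, measureReal_def, ENNReal.toReal_ofReal (by linarith : 0 ≤ ll), pi_nonneg]
  ring
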